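/- arXiv:1105.4018 — 3 statements merged into one kernel-verified Lean document; each statement's English description precedes it below -/
import Mathlib

section
/- Let ℓ be a prime, let G be a cyclic group of order ℓ acting simply transitively on a set X, and let μ be a cyclic group of order ℓ. A map f : X → μ is affine (i.e., f(x+P)·f(x+Q) = f(x)·f(x+P+Q) for all x, P, Q) if and only if for every x ∈ X and every nonzero P ∈ G one has f(x)^(ℓ−2)·f(x+P)·f(x−P) = 1. -/
/-!
Since `μ` has exponent `ℓ`, the factor `f x ^ (ℓ - 2)` is `(f x ^ 2)⁻¹`, so the right-hand side
says `f (x + P) * f (x - P) = f x ^ 2`. Along a generator `t` of `G` this makes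
`n ↦ f (n • t +ᵥ x)` a geometric sequence, i.e. `f (n • t +ᵥ x) = u ^ n * f x`, and such an `f`
is affine.
-/

section

variable {μ : Type*} [CommGroup μ]

theorem pow_sub_two_mul_eq_one_iff {ℓ : ℕ} (hℓ : 2 ≤ ℓ) {m : μ} (hm : m ^ ℓ = 1) (a : μ) :
    m ^ (ℓ - 2) * a = 1 ↔ a = m ^ 2 := by
  have hinv : m ^ (ℓ - 2) = (m ^ 2)⁻¹ :=
    eq_inv_of_mul_eq_one_left (by rw [← pow_add, Nat.sub_add_cancel hℓ, hm])
  rw [hinv, inv_mul_eq_one, eq_comm]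

theorem Int.eq_zpow_mul_of_mul_eq_sq {a : ℤ → μ} (h : ∀ n, a (n + 1) * a (n - 1) = a n ^ 2)
    (n : ℤ) : a n = (a 1 / a 0) ^ n * a 0 := by
  have hratio : ∀ n, a (n + 1) / a n = a 1 / a 0 := by
    intro n
    induction n using Int.induction_on with
    | zero => simp
    | succ k ih =>
      rw [← ih, div_eq_div_iff_mul_eq_mul, ← sq, ← h (k + 1), add_sub_cancel_right]
    | pred k ih =>
      rw [← ih, div_eq_div_iff_mul_eq_mul, sub_add_cancel, ← sq, ← h]
  induction n using Int.induction_on with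
  | zero => simp
  | succ k ih => rw [zpow_add_one, mul_right_comm, ← ih, ← hratio k, mul_div_cancel]
  | pred k ih =>
    rw [zpow_sub_one, mul_right_comm, ← ih, ← hratio (-k - 1), sub_add_cancel, inv_div,
      mul_div_cancel]

end

section

variable {G X μ : Type*} [AddCommGroup G] [AddTorsor G X] [CommGroup μ] {f : X → μ}

theorem mul_eq_sq_of_affine
    (hf : ∀ (x : X) (P Q : G), f (P +ᵥ x) * f (Q +ᵥ x) = f x * f ((P + Q) +ᵥ x))
    (x : X) (P : G) : f (P +ᵥ x) * f (-P +ᵥ x) = f x ^ 2 := by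
  rw [hf, add_neg_cancel, zero_vadd, sq]

theorem affine_of_mul_eq_sq [IsAddCyclic G]
    (hf : ∀ (x : X) (P : G), f (P +ᵥ x) * f (-P +ᵥ x) = f x ^ 2)
    (x : X) (P Q : G) : f (P +ᵥ x) * f (Q +ᵥ x) = f x * f ((P + Q) +ᵥ x) := by
  obtain ⟨t, ht⟩ := IsAddCyclic.exists_generator (α := G)
  have hgeom : ∀ n : ℤ, f (n • t +ᵥ x) = (f (t +ᵥ x) / f x) ^ n * f x := by
    simpa using Int.eq_zpow_mul_of_mul_eq_sq (a := fun n : ℤ ↦ f (n • t +ᵥ x)) fun n ↦ by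
      simpa [vadd_vadd, add_zsmul, sub_zsmul, add_comm, sub_eq_neg_add] using hf (n • t +ᵥ x) t
  obtain ⟨k, rfl⟩ := AddSubgroup.mem_zmultiples_iff.mp (ht P)
  obtain ⟨l, rfl⟩ := AddSubgroup.mem_zmultiples_iff.mp (ht Q)
  rw [← add_zsmul, hgeom, hgeom, hgeom, zpow_add]
  ac_rfl

theorem affine_iff_forall_mul_eq_sq [IsAddCyclic G] :
    (∀ (x : X) (P Q : G), f (P +ᵥ x) * f (Q +ᵥ x) = f x * f ((P + Q) +ᵥ x)) ↔
    ∀ (x : X) (P : G), f (P +ᵥ x) * f (-P +ᵥ x) = f x ^ 2 :=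
  ⟨mul_eq_sq_of_affine, affine_of_mul_eq_sq⟩

end

theorem affine_iff_partial_two_trivial_general
    {G X μ : Type*} [AddCommGroup G] [AddTorsor G X] [CommGroup μ]
    (ℓ : ℕ) (hℓ : ℓ.Prime)
    (hG : IsAddCyclic G)
    (hμcard : Nat.card μ = ℓ)
    (f : X → μ) :
    (∀ (x : X) (P Q : G), f (P +ᵥ x) * f (Q +ᵥ x) = f x * f ((P + Q) +ᵥ x)) ↔
    (∀ (x : X) (P : G), P ≠ 0 → f x ^ (ℓ - 2) * f (P +ᵥ x) * f (-P +ᵥ x) = 1) := by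
  have hexp (m : μ) : m ^ ℓ = 1 := hμcard ▸ pow_card_eq_one'
  simp_rw [affine_iff_forall_mul_eq_sq, mul_assoc, pow_sub_two_mul_eq_one_iff hℓ.two_le (hexp _)]
  refine ⟨fun h x P _ ↦ h x P, fun h x P ↦ ?_⟩
  rcases eq_or_ne P 0 with rfl | hP
  · rw [neg_zero, zero_vadd, sq]
  · exact h x P hP

/-- Let `ℓ` be a prime, `G` a cyclic group of order `ℓ` acting simply transitively
on `X`, and `μ` a cyclic group of order `ℓ`. A map `f : X → μ` is affine if and
only if `f(x)^(ℓ−2)·f(x+P)·f(x−P) = 1` for all `x` and all nonzero `P`. -/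
theorem affine_iff_partial_two_trivial
    {G X μ : Type*} [AddCommGroup G] [AddTorsor G X] [CommGroup μ]
    (ℓ : ℕ) (hℓ : ℓ.Prime)
    (hG : IsAddCyclic G) (hGcard : Nat.card G = ℓ)
    (hμ : IsCyclic μ) (hμcard : Nat.card μ = ℓ)
    (f : X → μ) :
    (∀ (x : X) (P Q : G), f (P +ᵥ x) * f (Q +ᵥ x) = f x * f ((P + Q) +ᵥ x)) ↔
    (∀ (x : X) (P : G), P ≠ 0 → f x ^ (ℓ - 2) * f (P +ᵥ x) * f (-P +ᵥ x) = 1) :=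
  affine_iff_partial_two_trivial_general ℓ hℓ hG hμcard f
end

section
/- Let G be a finite abelian group and let ⟨·,·⟩ : G × G → ℚ/ℤ be a nondegenerate alternating bilinear pairing (nondegenerate: ⟨x, y⟩ = 0 for all y implies x = 0; alternating: ⟨x, x⟩ = 0 for all x). Then the order of G is a perfect square. -/
/-!
Induction on `|G|`. Let `x` have maximal order `N = exp G`. Nondegeneracy gives `y` with `⟨x, y⟩`
of order `N`; as the `N`-torsion of `ℚ/ℤ` is cyclic of order `N`, `⟨x, y⟩` generates it. Since the
pairing is alternating, `z ↦ (⟨x, z⟩, ⟨y, z⟩)` sends `s • y - t • x` to `(s, t) • ⟨x, y⟩`, so it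
maps `G` onto `(ℤ/N)²`. Its kernel `K`, the orthogonal complement of `x` and `y`, complements
their span, so the pairing stays nondegenerate on `K`, and `|G| = N² |K|`.
-/

open AddSubgroup

namespace AddCircle

variable {𝕜 : Type*} [Field 𝕜] [LinearOrder 𝕜] [IsStrictOrderedRing 𝕜] {p : 𝕜} [Fact (0 < p)]

theorem mem_zmultiples_period_div_of_nsmul_eq_zero {n : ℕ} (hn : 0 < n) {u : AddCircle p}
    (hu : n • u = 0) : u ∈ zmultiples ((p / n : 𝕜) : AddCircle p) := by
  obtain ⟨m, -, rfl⟩ := (AddCircle.nsmul_eq_zero_iff hn).mp hu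
  rw [natCast_div_mul_eq_nsmul]
  exact nsmul_mem (mem_zmultiples _) m

theorem mem_zmultiples_of_addOrderOf_nsmul_eq_zero {a u : AddCircle p} (ha : IsOfFinAddOrder a)
    (hu : addOrderOf a • u = 0) : u ∈ zmultiples a := by
  have hn := ha.addOrderOf_pos
  have hgen : zmultiples a = zmultiples ((p / addOrderOf a : 𝕜) : AddCircle p) := by
    have : Finite (zmultiples ((p / addOrderOf a : 𝕜) : AddCircle p)) :=
      Nat.finite_of_card_ne_zero (by rw [Nat.card_zmultiples, addOrderOf_period_div hn]; omega)
    refine eq_of_le_of_card_ge (zmultiples_le_of_mem ?_) ?_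
    · exact mem_zmultiples_period_div_of_nsmul_eq_zero hn (addOrderOf_nsmul_eq_zero a)
    · rw [Nat.card_zmultiples, Nat.card_zmultiples, addOrderOf_period_div hn]
  exact hgen ▸ mem_zmultiples_period_div_of_nsmul_eq_zero hn hu

theorem map_mem_zmultiples_of_addOrderOf_eq_exponent {G : Type*} [AddCommGroup G] [Finite G]
    (f : G →+ AddCircle p) {a : AddCircle p} (ha : addOrderOf a = AddMonoid.exponent G) (g : G) :
    f g ∈ zmultiples a := by
  refine mem_zmultiples_of_addOrderOf_nsmul_eq_zero ?_ ?_
  · exact addOrderOf_pos_iff.mp (ha ▸ Nat.pos_of_ne_zero AddMonoid.exponent_ne_zero_of_finite)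
  · rw [ha, ← map_nsmul, AddMonoid.exponent_nsmul_eq_zero, map_zero]

end AddCircle

namespace AddMonoidHom

variable {G A : Type*} [AddCommGroup G] [AddCommGroup A] {B : G →+ G →+ A}

theorem apply_swap_eq_neg (halt : ∀ x, B x x = 0) (x y : G) : B y x = -B x y := by
  have h := halt (x + y)
  simp only [map_add, add_apply, halt, zero_add, add_zero] at h
  exact eq_neg_of_add_eq_zero_left h

theorem exists_addOrderOf_apply_eq [Finite G] (hnd : ∀ x, (∀ y, B x y = 0) → x = 0) (x : G) :
    ∃ y, addOrderOf (B x y) = addOrderOf x := by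
  have : Finite (B x).range := (Set.finite_range (B x)).to_subtype
  obtain ⟨⟨_, y, rfl⟩, hy⟩ :=
    AddMonoid.exists_addOrderOf_eq_exponent (AddMonoid.ExponentExists.of_finite (G := (B x).range))
  refine ⟨y, (addOrderOf_map_dvd (B.flip y) x).antisymm ?_⟩
  rw [← AddSubgroup.addOrderOf_coe] at hy
  rw [flip_apply, hy]
  refine addOrderOf_dvd_of_nsmul_eq_zero (hnd _ fun z => ?_)
  rw [map_nsmul, nsmul_apply]
  exact congrArg Subtype.val (AddMonoid.exponent_nsmul_eq_zero (⟨B x z, z, rfl⟩ : (B x).range))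

theorem apply_zsmul_sub_zsmul (halt : ∀ x, B x x = 0) (x y : G) (s t : ℤ) :
    B x (s • y - t • x) = s • B x y ∧ B y (s • y - t • x) = t • B x y := by
  simp only [map_sub, map_zsmul, halt, apply_swap_eq_neg halt y x, smul_zero, sub_zero, zero_sub,
    smul_neg, and_self]

theorem range_prod_eq_prod_zmultiples (halt : ∀ x, B x x = 0) {x y : G}
    (hgen : ∀ z, B x z ∈ zmultiples (B x y) ∧ B y z ∈ zmultiples (B x y)) :
    ((B x).prod (B y)).range = (zmultiples (B x y)).prod (zmultiples (B x y)) := by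
  ext ⟨b, c⟩
  constructor
  · rintro ⟨z, hz⟩
    rw [← hz]
    exact hgen z
  · rintro ⟨⟨s, rfl⟩, ⟨t, rfl⟩⟩
    obtain ⟨hs, ht⟩ := apply_zsmul_sub_zsmul halt x y s t
    exact ⟨s • y - t • x, Prod.ext hs ht⟩

theorem natCard_eq_addOrderOf_mul_addOrderOf_mul_card_ker (halt : ∀ x, B x x = 0) {x y : G}
    (hgen : ∀ z, B x z ∈ zmultiples (B x y) ∧ B y z ∈ zmultiples (B x y)) :
    Nat.card G = addOrderOf (B x y) * addOrderOf (B x y) * Nat.card ((B x).prod (B y)).ker := by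
  rw [card_eq_card_quotient_mul_card_addSubgroup ((B x).prod (B y)).ker,
    Nat.card_congr (QuotientAddGroup.quotientKerEquivRange _).toEquiv,
    range_prod_eq_prod_zmultiples halt hgen, Nat.card_congr (prodEquiv _ _).toEquiv,
    Nat.card_prod, Nat.card_zmultiples]

theorem eq_zero_of_mem_ker_of_forall_mem_ker_apply_eq_zero (halt : ∀ x, B x x = 0)
    (hnd : ∀ x, (∀ y, B x y = 0) → x = 0) {x y : G}
    (hgen : ∀ z, B x z ∈ zmultiples (B x y) ∧ B y z ∈ zmultiples (B x y))
    {k : G} (hk : k ∈ ((B x).prod (B y)).ker)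
    (horth : ∀ l ∈ ((B x).prod (B y)).ker, B k l = 0) : k = 0 := by
  simp only [mem_ker, prod_apply, Prod.mk_eq_zero] at hk
  refine hnd k fun g => ?_
  obtain ⟨⟨s, hs⟩, ⟨t, ht⟩⟩ := hgen g
  dsimp only at hs ht
  -- `s • y - t • x` is the component of `g` in the span of `x` and `y`
  have hproj : g - (s • y - t • x) ∈ ((B x).prod (B y)).ker := by
    obtain ⟨hxw, hyw⟩ := apply_zsmul_sub_zsmul halt x y s t
    rw [mem_ker, map_sub, prod_apply, prod_apply, hxw, hyw, hs, ht, Prod.mk_sub_mk, sub_self,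
      sub_self, Prod.mk_zero_zero]
  have hkx : B k x = 0 := by rw [apply_swap_eq_neg halt, hk.1, neg_zero]
  have hky : B k y = 0 := by rw [apply_swap_eq_neg halt, hk.2, neg_zero]
  calc B k g = B k (g - (s • y - t • x)) + B k (s • y - t • x) := by rw [← map_add, sub_add_cancel]
    _ = 0 := by
      simp only [horth _ hproj, map_sub, map_zsmul, hkx, hky, smul_zero, sub_zero, add_zero]

end AddMonoidHom

open AddMonoidHom in
theorem isSquare_natCard_of_alternating_of_nondegenerate {𝕜 : Type*} [Field 𝕜] [LinearOrder 𝕜]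
    [IsStrictOrderedRing 𝕜] {p : 𝕜} [Fact (0 < p)] {G : Type*} [AddCommGroup G] [Finite G]
    (B : G →+ G →+ AddCircle p) (halt : ∀ x, B x x = 0) (hnd : ∀ x, (∀ y, B x y = 0) → x = 0) :
    IsSquare (Nat.card G) := by
  induction hn : Nat.card G using Nat.strong_induction_on generalizing G with
  | _ n ih =>
  rcases subsingleton_or_nontrivial G with hG | hG
  · exact ⟨1, by rw [← hn, Nat.card_of_subsingleton (0 : G)]⟩
  obtain ⟨x, hx⟩ :=
    AddMonoid.exists_addOrderOf_eq_exponent (AddMonoid.ExponentExists.of_finite (G := G))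
  obtain ⟨y, hy⟩ := B.exists_addOrderOf_apply_eq hnd x
  rw [hx] at hy
  have hgen (z : G) : B x z ∈ zmultiples (B x y) ∧ B y z ∈ zmultiples (B x y) :=
    ⟨AddCircle.map_mem_zmultiples_of_addOrderOf_eq_exponent (B x) hy z,
      AddCircle.map_mem_zmultiples_of_addOrderOf_eq_exponent (B y) hy z⟩
  set K := ((B x).prod (B y)).ker
  have hcard : n = addOrderOf (B x y) * addOrderOf (B x y) * Nat.card K :=
    hn ▸ natCard_eq_addOrderOf_mul_addOrderOf_mul_card_ker halt hgen
  have hlt : Nat.card K < n := by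
    have hN : 1 < addOrderOf (B x y) := hy ▸ AddMonoid.one_lt_exponent
    have hK : 0 < Nat.card K := Nat.card_pos
    rw [hcard]
    nlinarith [Nat.mul_le_mul hN hN]
  obtain ⟨k, hk⟩ := ih (Nat.card K) hlt ((B.comp K.subtype).compl₂ K.subtype) (fun k => halt k)
    (fun k hk => Subtype.ext (eq_zero_of_mem_ker_of_forall_mem_ker_apply_eq_zero halt hnd hgen k.2
      fun l hl => hk ⟨l, hl⟩)) rfl
  exact ⟨addOrderOf (B x y) * k, by rw [hcard, hk]; ring⟩

/-- A finite abelian group carrying a nondegenerate alternating bilinear pairing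
with values in `ℚ/ℤ` has square order. -/
theorem card_isSquare_of_nondeg_alternating_pairing
    {G : Type*} [AddCommGroup G] [Fintype G]
    (e : G → G → AddCircle (1 : ℚ))
    (hl : ∀ x y z, e (x + y) z = e x z + e y z)
    (hr : ∀ x y z, e x (y + z) = e x y + e x z)
    (halt : ∀ x, e x x = 0)
    (hnd : ∀ x, (∀ y, e x y = 0) → x = 0) :
    IsSquare (Fintype.card G) := by
  rw [← Nat.card_eq_fintype_card]
  exact isSquare_natCard_of_alternating_of_nondegenerate
    (AddMonoidHom.mk' (fun x => AddMonoidHom.mk' (e x) (hr x)) fun x y => AddMonoidHom.ext (hl x y))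
    halt hnd
end

section
/- Let E be the elliptic curve over ℚ defined by the Weierstrass equation y² + xy + y = x³ + x² − 12241995603·x + 781027222459441. Then the point P = (−49091, 35573052) lies on E, is not the identity, and satisfies 5·P = O; that is, P is a rational point of order exactly 5. -/
/-! Doubling `P` along its tangent (slope `-71`) gives `2P = (103151, -24867022)`, and doubling
that point (slope `-397`) lands on `(-49091, -35523962) = -P`. Hence `4P = -P`, so `5P = 0`. -/

open WeierstrassCurve.Affine WeierstrassCurve.Affine.Point

section Doubling

variable {F : Type*} [Field F] [DecidableEq F] {W : WeierstrassCurve.Affine F}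

-- Stated without division, so that for explicit points every hypothesis is a numerical identity.
lemma two_nsmul_some_of_slope_eq {x y ℓ x' y' : F} {h : W.Nonsingular x y}
    (h' : W.Nonsingular x' y') (hy : y ≠ W.negY x y)
    (hℓ : ℓ * (y - W.negY x y) = 3 * x ^ 2 + 2 * W.a₂ * x + W.a₄ - W.a₁ * y)
    (hx' : W.addX x x ℓ = x') (hy' : W.addY x x y ℓ = y') :
    2 • some _ _ h = some _ _ h' := by
  have hslope : W.slope x x y y = ℓ := by
    rw [slope_of_Y_ne rfl hy, div_eq_iff (sub_ne_zero.2 hy), hℓ]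
  subst hx' hy'
  rw [two_nsmul, add_self_of_Y_ne hy]
  simp only [hslope]

end Doubling

/-- The point `(−49091, 35573052)` is a rational point of order exactly `5` on
the elliptic curve `y² + xy + y = x³ + x² − 12241995603x + 781027222459441`. -/
theorem torsion_point_of_order_five :
    let W : WeierstrassCurve.Affine ℚ :=
      { a₁ := 1, a₂ := 1, a₃ := 1, a₄ := -12241995603, a₆ := 781027222459441 }
    ∃ h : W.Nonsingular (-49091) 35573052,
      WeierstrassCurve.Affine.Point.some _ _ h ≠ 0 ∧
      5 • WeierstrassCurve.Affine.Point.some _ _ h = 0 := by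
  intro W
  have hP : W.Nonsingular (-49091) 35573052 := by norm_num [W, nonsingular_iff, equation_iff]
  have hQ : W.Nonsingular 103151 (-24867022) := by norm_num [W, nonsingular_iff, equation_iff]
  set P := some _ _ hP
  have double_P : 2 • P = some _ _ hQ :=
    two_nsmul_some_of_slope_eq (ℓ := -71) hQ (by norm_num [W, negY]) (by norm_num [W, negY])
      (by norm_num [W, addX]) (by norm_num [W, addY, negAddY, addX, negY])
  have double_Q : 2 • some _ _ hQ = -P := by
    rw [neg_some]
    exact two_nsmul_some_of_slope_eq (ℓ := -397) _ (by norm_num [W, negY])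
      (by norm_num [W, negY]) (by norm_num [W, addX])
      (by norm_num [W, addY, negAddY, addX, negY])
  refine ⟨hP, some_ne_zero hP, ?_⟩
  calc 5 • P = 2 • 2 • P + P := by abel
    _ = 0 := by rw [double_P, double_Q, neg_add_cancel]
end
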